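/- arXiv:2204.03747 — 4 statements merged into one kernel-verified Lean document; each statement's English description precedes it below -/
import Mathlib

section
/- Suppose (u^d, ε^d, y^d) is a length-T trajectory of the mixed traffic LTI system, the combined input data û^d(k) = col(ε^d(k), u^d(k)) ∈ ℝ^{m+1} is persistently exciting of order T_ini + N + 2n, and the system is controllable and observable with respect to the combined input. Partition the Hankel matrices as [U_p; U_f] = H_{T_ini+N}(u^d) (first T_ini block rows U_p, last N block rows U_f), and similarly [E_p; E_f] = H_{T_ini+N}(ε^d), [Y_p; Y_f] = H_{T_ini+N}(y^d). Then for every length-(T_ini+N) trajectory col(u_ini, ε_ini, y_ini, u, ε, y) of the system, there exists g ∈ ℝ^{T−T_ini−N+1} such that U_p g = u_ini, E_p g = ε_ini, Y_p g = y_ini, U_f g = u, E_f g = ε, and Y_f g = y. -/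
/-!
STATEMENT 1 (non-parametric representation, Proposition 1, existence part):
If `(uᵈ, εᵈ, yᵈ)` is a length-`T` trajectory of the mixed traffic LTI system
`x(k+1) = A x(k) + B u(k) + H ε(k)`, `y(k) = C x(k)` (state dim `2n`, input dim `m`,
scalar external input, output dim `n+m`), the combined input data
`ûᵈ(k) = col(εᵈ(k), uᵈ(k)) ∈ ℝ^{m+1}` is persistently exciting of order
`T_ini + N + 2n` (its Hankel matrix of that order has full row rank), and the system is
controllable and observable with respect to the combined input (with `B̂ = [H B]`),
then every length-`(T_ini + N)` trajectory `(u_ini, ε_ini, y_ini, u, ε, y)` of the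
system lies in the range of the partitioned Hankel matrices: there exists
`g ∈ ℝ^{T − T_ini − N + 1}` with `U_p g = u_ini`, `E_p g = ε_ini`, `Y_p g = y_ini`,
`U_f g = u`, `E_f g = ε`, `Y_f g = y`, where `U_p`/`U_f` are the first `T_ini` / last
`N` block rows of `H_{T_ini+N}(uᵈ)` (similarly for `E`, `Y`).
The full trajectory is encoded as sequences `uu, ee, yy` over times `0, …, T_ini+N−1`,
whose first `T_ini` entries are `(u_ini, ε_ini, y_ini)` and last `N` entries `(u, ε, y)`.
-/

open Matrix BigOperators

lemma aux_vecMul_inj {R C : Type*} [Fintype R] [Fintype C] [DecidableEq C]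
    (M : Matrix R C ℝ) (h : M.rank = Fintype.card R) (η : R → ℝ)
    (hη : Matrix.vecMul η M = 0) : η = 0 := by
  have h1 : Mᵀ.rank = Fintype.card R := by rw [Matrix.rank_transpose]; exact h
  have h3 : LinearMap.ker Mᵀ.mulVecLin = ⊥ := by
    have hr := LinearMap.finrank_range_add_finrank_ker Mᵀ.mulVecLin
    rw [Module.finrank_fintype_fun_eq_card] at hr
    have h0 : Module.finrank ℝ (LinearMap.ker Mᵀ.mulVecLin) = 0 := by
      have : Module.finrank ℝ (LinearMap.range Mᵀ.mulVecLin) = Fintype.card R := h1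
      omega
    exact Submodule.finrank_eq_zero.mp h0
  have hm : η ∈ LinearMap.ker Mᵀ.mulVecLin := by
    show Mᵀ.mulVecLin η = 0
    rw [Matrix.mulVecLin_apply, Matrix.mulVec_transpose]
    exact hη
  rw [h3] at hm; simpa using hm

lemma aux_mulVec_surj {R C : Type*} [Fintype R] [Fintype C] [DecidableEq C] [DecidableEq R]
    (M : Matrix R C ℝ) (h : ∀ η : R → ℝ, Matrix.vecMul η M = 0 → η = 0) :
    Function.Surjective M.mulVec := by
  have hinj : Function.Injective Mᵀ.mulVecLin := by
    rw [← LinearMap.ker_eq_bot, LinearMap.ker_eq_bot']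
    intro η hη
    refine h η ?_
    rw [← Matrix.mulVec_transpose]
    simpa [Matrix.mulVecLin_apply, Matrix.mulVec_transpose] using hη
  have h1 : Mᵀ.rank = Fintype.card R := by
    unfold Matrix.rank
    rw [LinearMap.finrank_range_of_inj hinj, Module.finrank_fintype_fun_eq_card]
  have h2 : M.rank = Fintype.card R := by rw [← Matrix.rank_transpose]; exact h1
  have h3 : LinearMap.range M.mulVecLin = ⊤ := by
    apply Submodule.eq_top_of_finrank_eq
    rw [Module.finrank_fintype_fun_eq_card]; exact h2
  intro v
  have hv : v ∈ LinearMap.range M.mulVecLin := by rw [h3]; trivial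
  obtain ⟨g, hg⟩ := hv
  exact ⟨g, by simpa using hg⟩

lemma aux_CH {d : ℕ} (A : Matrix (Fin d) (Fin d) ℝ) :
    ∃ c : ℕ → ℝ, A ^ d = ∑ i ∈ Finset.range d, c i • A ^ i := by
  have hdeg : A.charpoly.natDegree = d := by
    simpa using A.charpoly_natDegree_eq_dim
  have h0 := A.aeval_self_charpoly
  rw [Polynomial.aeval_eq_sum_range] at h0
  rw [hdeg, Finset.sum_range_succ] at h0
  have hmon : A.charpoly.coeff d = 1 := by
    have := A.charpoly_monic
    rw [Polynomial.Monic, Polynomial.leadingCoeff, hdeg] at this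
    exact this
  refine ⟨fun i => -(A.charpoly.coeff i), ?_⟩
  rw [hmon] at h0
  have he : A ^ d = -(∑ i ∈ Finset.range d, A.charpoly.coeff i • A ^ i) := by
    rw [eq_neg_iff_add_eq_zero]
    simpa [add_comm] using h0
  rw [he, ← Finset.sum_neg_distrib]
  simp [neg_smul]

lemma aux_prop {d q T : ℕ} (A : Matrix (Fin d) (Fin d) ℝ) (Bh : Matrix (Fin d) (Fin q) ℝ)
    (xd : ℕ → Fin d → ℝ) (uh : ℕ → Fin q → ℝ)
    (hdyn : ∀ k, k + 1 < T → xd (k+1) = A.mulVec (xd k) + Bh.mulVec (uh k)) :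
    ∀ i j, j + i < T → xd (j+i) = (A^i).mulVec (xd j)
      + ∑ s ∈ Finset.range i, ((A^(i-1-s)) * Bh).mulVec (uh (j+s)) := by
  intro i
  induction i with
  | zero => intro j _; simp
  | succ i IH =>
    intro j hj
    have h1 : j + i + 1 < T := by omega
    have h2 : xd (j + (i+1)) = A.mulVec (xd (j+i)) + Bh.mulVec (uh (j+i)) := by
      rw [show j + (i+1) = (j+i) + 1 by omega]
      exact hdyn (j+i) h1
    rw [h2, IH j (by omega)]
    rw [Matrix.mulVec_add, Matrix.mulVec_mulVec, ← pow_succ']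
    rw [Finset.sum_range_succ]
    have h3 : A.mulVec (∑ s ∈ Finset.range i, ((A^(i-1-s)) * Bh).mulVec (uh (j+s)))
        = ∑ s ∈ Finset.range i, ((A^(i+1-1-s)) * Bh).mulVec (uh (j+s)) := by
      rw [show A.mulVec (∑ s ∈ Finset.range i, ((A^(i-1-s)) * Bh).mulVec (uh (j+s)))
          = ∑ s ∈ Finset.range i, A.mulVec (((A^(i-1-s)) * Bh).mulVec (uh (j+s))) from
        map_sum A.mulVecLin _ _]
      refine Finset.sum_congr rfl fun s hs => ?_
      rw [Finset.mem_range] at hs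
      rw [Matrix.mulVec_mulVec, ← Matrix.mul_assoc, ← pow_succ',
        show i - 1 - s + 1 = i + 1 - 1 - s by omega]
    rw [h3]
    have h4 : ((A^(i+1-1-i)) * Bh) = Bh := by
      rw [show i+1-1-i = 0 by omega, pow_zero, Matrix.one_mul]
    rw [h4]
    abel

theorem deep_lcc_representation_exists
    (n m T Tini N : ℕ) (hTN : Tini + N ≤ T)
    (A : Matrix (Fin (2*n)) (Fin (2*n)) ℝ) (B : Matrix (Fin (2*n)) (Fin m) ℝ)
    (H : Fin (2*n) → ℝ) (C : Matrix (Fin (n+m)) (Fin (2*n)) ℝ)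
    (ud : ℕ → Fin m → ℝ) (εd : ℕ → ℝ) (yd : ℕ → Fin (n+m) → ℝ)
    (xd : ℕ → Fin (2*n) → ℝ)
    (hdyn : ∀ k, k + 1 < T →
      xd (k+1) = A.mulVec (xd k) + B.mulVec (ud k) + εd k • H)
    (hout : ∀ k, k < T → yd k = C.mulVec (xd k))
    -- persistent excitation of the combined input data `col(εᵈ, uᵈ)` of order Tini+N+2n
    (hPE : (Matrix.of fun (i : Fin (Tini + N + 2*n) × Fin (m+1))
        (j : Fin (T - (Tini + N + 2*n) + 1)) =>
        (Fin.cons (εd ((i.1 : ℕ) + (j : ℕ))) (ud ((i.1 : ℕ) + (j : ℕ))) : Fin (m+1) → ℝ) i.2).rank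
      = (m+1) * (Tini + N + 2*n))
    -- controllability w.r.t. the combined input: rank [B̂, AB̂, …, A^{2n−1}B̂] = 2n, B̂ = [H B]
    (hctrb : (Matrix.of fun (i : Fin (2*n)) (p : Fin (2*n) × Fin (m+1)) =>
        ((A ^ (p.1 : ℕ)) * Matrix.of (fun i' => (Fin.cons (H i') (B i') : Fin (m+1) → ℝ))) i p.2).rank
      = 2*n)
    -- observability: rank col(C, CA, …, CA^{2n−1}) = 2n
    (hobsv : (Matrix.of fun (p : Fin (2*n) × Fin (n+m)) (j : Fin (2*n)) =>
        (C * A ^ (p.1 : ℕ)) p.2 j).rank = 2*n)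
    -- an arbitrary length-(Tini+N) trajectory of the same system
    (uu : ℕ → Fin m → ℝ) (ee : ℕ → ℝ) (yy : ℕ → Fin (n+m) → ℝ)
    (htraj : ∃ x : ℕ → Fin (2*n) → ℝ,
      (∀ k, k + 1 < Tini + N →
        x (k+1) = A.mulVec (x k) + B.mulVec (uu k) + ee k • H) ∧
      (∀ k, k < Tini + N → yy k = C.mulVec (x k))) :
    ∃ g : Fin (T - (Tini + N) + 1) → ℝ,
      -- U_p g = u_ini
      ((Matrix.of fun (i : Fin Tini × Fin m) (j : Fin (T - (Tini + N) + 1)) =>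
          ud ((i.1 : ℕ) + (j : ℕ)) i.2).mulVec g = fun i => uu (i.1 : ℕ) i.2) ∧
      -- E_p g = ε_ini
      ((Matrix.of fun (i : Fin Tini) (j : Fin (T - (Tini + N) + 1)) =>
          εd ((i : ℕ) + (j : ℕ))).mulVec g = fun (i : Fin Tini) => ee (i : ℕ)) ∧
      -- Y_p g = y_ini
      ((Matrix.of fun (i : Fin Tini × Fin (n+m)) (j : Fin (T - (Tini + N) + 1)) =>
          yd ((i.1 : ℕ) + (j : ℕ)) i.2).mulVec g = fun i => yy (i.1 : ℕ) i.2) ∧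
      -- U_f g = u
      ((Matrix.of fun (i : Fin N × Fin m) (j : Fin (T - (Tini + N) + 1)) =>
          ud (Tini + (i.1 : ℕ) + (j : ℕ)) i.2).mulVec g = fun i => uu (Tini + (i.1 : ℕ)) i.2) ∧
      -- E_f g = ε
      ((Matrix.of fun (i : Fin N) (j : Fin (T - (Tini + N) + 1)) =>
          εd (Tini + (i : ℕ) + (j : ℕ))).mulVec g = fun (i : Fin N) => ee (Tini + (i : ℕ))) ∧
      -- Y_f g = y
      ((Matrix.of fun (i : Fin N × Fin (n+m)) (j : Fin (T - (Tini + N) + 1)) =>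
          yd (Tini + (i.1 : ℕ) + (j : ℕ)) i.2).mulVec g = fun i => yy (Tini + (i.1 : ℕ)) i.2) := by
  obtain ⟨x, hxdyn, hxout⟩ := htraj
  -- trivial case
  by_cases hL0 : Tini + N = 0
  · refine ⟨0, ?_, ?_, ?_, ?_, ?_, ?_⟩ <;> funext i <;>
      [ (exact absurd i.1.2 (by omega)); (exact absurd i.2 (by omega));
        (exact absurd i.1.2 (by omega)); (exact absurd i.1.2 (by omega));
        (exact absurd i.2 (by omega)); (exact absurd i.1.2 (by omega)) ]
  have hL1 : 1 ≤ Tini + N := by omega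
  -- combined input and input matrix
  set uh : ℕ → Fin (m+1) → ℝ := fun k => Fin.cons (εd k) (ud k) with huh
  set Bh : Matrix (Fin (2*n)) (Fin (m+1)) ℝ :=
    Matrix.of (fun i => (Fin.cons (H i) (B i) : Fin (m+1) → ℝ)) with hBh
  have hBhv : ∀ (e : ℝ) (u : Fin m → ℝ),
      Bh.mulVec (Fin.cons e u) = B.mulVec u + e • H := by
    intro e u
    funext r
    simp [hBh, Matrix.mulVec, dotProduct, Fin.sum_univ_succ, Pi.add_apply]
    ring
  have hdyn' : ∀ k, k + 1 < T → xd (k+1) = A.mulVec (xd k) + Bh.mulVec (uh k) := by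
    intro k hk
    rw [hdyn k hk, huh, hBhv]
    abel
  have hxdyn' : ∀ k, k + 1 < Tini + N →
      x (k+1) = A.mulVec (x k) + Bh.mulVec (Fin.cons (ee k) (uu k)) := by
    intro k hk
    rw [hxdyn k hk, hBhv]
    abel
  -- T is long enough
  have hT2n : Tini + N + 2*n ≤ T := by
    rcases Nat.eq_zero_or_pos n with hn | hn
    · omega
    · by_contra hcon
      have hr := (Matrix.of fun (i : Fin (Tini + N + 2*n) × Fin (m+1))
        (j : Fin (T - (Tini + N + 2*n) + 1)) =>
        (Fin.cons (εd ((i.1 : ℕ) + (j : ℕ))) (ud ((i.1 : ℕ) + (j : ℕ))) : Fin (m+1) → ℝ) i.2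
        ).rank_le_card_width
      rw [hPE] at hr
      simp only [Fintype.card_fin] at hr
      have : T - (Tini + N + 2*n) = 0 := by omega
      rw [this] at hr
      nlinarith
  -- the key matrix [Hankel of combined input; initial states]
  set Mbig : Matrix ((Fin (Tini+N) × Fin (m+1)) ⊕ Fin (2*n)) (Fin (T - (Tini+N) + 1)) ℝ :=
    Matrix.of (Sum.elim (fun p j => uh ((p.1:ℕ) + (j:ℕ)) p.2) (fun r j => xd (j:ℕ) r))
    with hMbig
  have hsurj : Function.Surjective Mbig.mulVec := by
    apply aux_mulVec_surj
    intro η hη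
    set ξf : ℕ → Fin (m+1) → ℝ :=
      fun k c => if h : k < Tini + N then η (Sum.inl (⟨k, h⟩, c)) else 0 with hξf
    set ηr : Fin (2*n) → ℝ := fun r => η (Sum.inr r) with hηrdef
    -- the annihilation relation, column by column
    have hann : ∀ j, j + (Tini + N) ≤ T →
        (∑ k ∈ Finset.range (Tini+N), ∑ c : Fin (m+1), ξf k c * uh (k + j) c)
          + ∑ r : Fin (2*n), ηr r * xd j r = 0 := by
      intro j hj
      have hjK : j < T - (Tini+N) + 1 := by omega
      have h0 : (∑ p : Fin (Tini+N) × Fin (m+1), η (Sum.inl p) * Mbig (Sum.inl p) ⟨j, hjK⟩)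
          + ∑ r : Fin (2*n), η (Sum.inr r) * Mbig (Sum.inr r) ⟨j, hjK⟩ = 0 := by
        have h1 := congrFun hη ⟨j, hjK⟩
        simpa [Matrix.vecMul, dotProduct, Fintype.sum_sum_type] using h1
      refine Eq.trans ?_ h0
      rw [Fintype.sum_prod_type]
      congr 1
      · rw [← Fin.sum_univ_eq_sum_range
          (fun k => ∑ c : Fin (m+1), ξf k c * uh (k + j) c) (Tini+N)]
        refine Finset.sum_congr rfl fun k _ => Finset.sum_congr rfl fun c _ => ?_
        have hx : ξf (k:ℕ) c = η (Sum.inl (k, c)) := by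
          simp only [hξf]; rw [dif_pos k.2]
        rw [hx]
        rfl
    -- the zeta vectors
    set zeta : ℕ → ℕ → Fin (m+1) → ℝ := fun i b c =>
      (if b < i then Matrix.vecMul ηr ((A^(i-1-b)) * Bh) c else 0) +
      (if i ≤ b then ξf (b - i) c else 0) with hzdef
    have hprop := aux_prop (T := T) A Bh xd uh hdyn'
    have hzeta : ∀ i, i ≤ 2*n → ∀ j, j + (Tini + N + 2*n) ≤ T →
        ∑ b ∈ Finset.range (Tini + N + 2*n), ∑ c : Fin (m+1), zeta i b c * uh (b + j) c
          = -∑ r : Fin (2*n), ηr r * ((A^i).mulVec (xd j)) r := by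
      intro i hi j hj
      have hsplit : ∑ b ∈ Finset.range (Tini + N + 2*n), ∑ c : Fin (m+1), zeta i b c * uh (b + j) c
        = (∑ b ∈ Finset.range (Tini + N + 2*n), if b < i then
             ∑ c : Fin (m+1), Matrix.vecMul ηr ((A^(i-1-b)) * Bh) c * uh (b + j) c else 0)
        + (∑ b ∈ Finset.range (Tini + N + 2*n), if i ≤ b then
             ∑ c : Fin (m+1), ξf (b - i) c * uh (b + j) c else 0) := by
        rw [← Finset.sum_add_distrib]
        refine Finset.sum_congr rfl fun b _ => ?_
        simp only [hzdef]
        by_cases hb1 : b < i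
        · have hb2 : ¬ i ≤ b := by omega
          simp [hb1, hb2, add_mul]
        · have hb2 : i ≤ b := by omega
          simp [hb1, hb2, add_mul]
      rw [hsplit]
      have hS1 : (∑ b ∈ Finset.range (Tini + N + 2*n), if b < i then
             ∑ c : Fin (m+1), Matrix.vecMul ηr ((A^(i-1-b)) * Bh) c * uh (b + j) c else 0)
          = ∑ s ∈ Finset.range i, ∑ r : Fin (2*n),
              ηr r * (((A^(i-1-s)) * Bh).mulVec (uh (j+s))) r := by
        rw [← Finset.sum_subset (Finset.range_subset_range.2 (by omega : i ≤ Tini+N+2*n))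
          (fun b _ hb => if_neg (by simpa using hb))]
        refine Finset.sum_congr rfl fun s hs => ?_
        rw [Finset.mem_range] at hs
        rw [if_pos hs]
        simp only [Matrix.vecMul, Matrix.mulVec, dotProduct, Finset.sum_mul, Finset.mul_sum]
        rw [Finset.sum_comm]
        refine Finset.sum_congr rfl fun r _ => Finset.sum_congr rfl fun c _ => ?_
        rw [show j + s = s + j by omega]
        ring
      have hS2 : (∑ b ∈ Finset.range (Tini + N + 2*n), if i ≤ b then
             ∑ c : Fin (m+1), ξf (b - i) c * uh (b + j) c else 0)
          = ∑ k ∈ Finset.range (Tini+N), ∑ c : Fin (m+1), ξf k c * uh (k + (i + j)) c := by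
        rw [← Finset.sum_subset
          (Finset.range_subset_range.2 (by omega : i + (Tini+N) ≤ Tini+N+2*n)) ?_]
        · rw [Finset.sum_range_add]
          rw [Finset.sum_eq_zero
            (fun b hb => by rw [Finset.mem_range] at hb; rw [if_neg (by omega)]), zero_add]
          refine Finset.sum_congr rfl fun k _ => ?_
          rw [if_pos (by omega)]
          rw [show i + k - i = k by omega, show i + k + j = k + (i + j) by omega]
        · intro b hb hbn
          rw [Finset.mem_range] at hb
          rw [Finset.mem_range] at hbn
          rw [if_pos (by omega)]
          apply Finset.sum_eq_zero
          intro c _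
          have hz : ξf (b - i) c = 0 := by
            simp only [hξf]; rw [dif_neg (by omega)]
          rw [hz, zero_mul]
      rw [hS1, hS2]
      have hx2 : xd (i + j) = (A^i).mulVec (xd j)
          + ∑ s ∈ Finset.range i, ((A^(i-1-s)) * Bh).mulVec (uh (j+s)) := by
        rw [show i + j = j + i by omega]
        exact hprop i j (by omega)
      have hann2 : ∑ k ∈ Finset.range (Tini+N), ∑ c : Fin (m+1), ξf k c * uh (k + (i + j)) c
          = -∑ r : Fin (2*n), ηr r * xd (i+j) r := by
        have h3 := hann (i+j) (by omega)
        linarith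
      rw [hann2, hx2]
      have hQ : ∑ r : Fin (2*n), ηr r * (((A^i).mulVec (xd j)
            + ∑ s ∈ Finset.range i, ((A^(i-1-s)) * Bh).mulVec (uh (j+s))) r)
          = (∑ r : Fin (2*n), ηr r * ((A^i).mulVec (xd j)) r)
            + ∑ s ∈ Finset.range i, ∑ r : Fin (2*n),
                ηr r * (((A^(i-1-s)) * Bh).mulVec (uh (j+s))) r := by
        simp only [Pi.add_apply, Finset.sum_apply, mul_add, Finset.mul_sum,
          Finset.sum_add_distrib]
        congr 1
        exact Finset.sum_comm
      rw [hQ]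
      ring
    -- Cayley-Hamilton
    obtain ⟨cc, hCH⟩ := aux_CH A
    have hCHv : ∀ v : Fin (2*n) → ℝ, ∀ r : Fin (2*n), ((A^(2*n)).mulVec v) r
        = ∑ i ∈ Finset.range (2*n), cc i * ((A^i).mulVec v) r := by
      intro v r
      rw [hCH]
      simp only [Matrix.mulVec, dotProduct, Matrix.sum_apply, Matrix.smul_apply,
        smul_eq_mul, Finset.sum_mul, Finset.mul_sum]
      rw [Finset.sum_comm]
      exact Finset.sum_congr rfl fun i _ => Finset.sum_congr rfl fun j' _ => by ring
    set w : Fin (Tini + N + 2*n) × Fin (m+1) → ℝ :=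
      fun p => zeta (2*n) (p.1:ℕ) p.2
        - ∑ i ∈ Finset.range (2*n), cc i * zeta i (p.1:ℕ) p.2 with hwdef
    have hw0 : w = 0 := by
      apply aux_vecMul_inj (Matrix.of fun (i : Fin (Tini + N + 2*n) × Fin (m+1))
          (j : Fin (T - (Tini + N + 2*n) + 1)) =>
          (Fin.cons (εd ((i.1 : ℕ) + (j : ℕ))) (ud ((i.1 : ℕ) + (j : ℕ))) : Fin (m+1) → ℝ) i.2)
        (by rw [hPE]; simp [Fintype.card_prod, mul_comm]) w
      funext jp
      have hjp : (jp:ℕ) + (Tini + N + 2*n) ≤ T := by have := jp.2; omega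
      have hcol : ∀ i, i ≤ 2*n →
          ∑ b : Fin (Tini + N + 2*n), ∑ c : Fin (m+1),
              zeta i (b:ℕ) c * uh ((b:ℕ) + (jp:ℕ)) c
            = -∑ r : Fin (2*n), ηr r * ((A^i).mulVec (xd (jp:ℕ))) r := by
        intro i hi
        rw [Fin.sum_univ_eq_sum_range
          (fun b => ∑ c : Fin (m+1), zeta i b c * uh (b + (jp:ℕ)) c) (Tini+N+2*n)]
        exact hzeta i hi (jp:ℕ) hjp
      show ∑ p : Fin (Tini+N+2*n) × Fin (m+1), w p *
          (Fin.cons (εd ((p.1:ℕ) + (jp:ℕ))) (ud ((p.1:ℕ) + (jp:ℕ))) : Fin (m+1) → ℝ) p.2 = 0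
      have hcons : ∀ (b : Fin (Tini+N+2*n)) (c : Fin (m+1)),
          (Fin.cons (εd ((b:ℕ) + (jp:ℕ))) (ud ((b:ℕ) + (jp:ℕ))) : Fin (m+1) → ℝ) c
            = uh ((b:ℕ) + (jp:ℕ)) c := fun b c => rfl
      rw [Fintype.sum_prod_type]
      have expand : ∀ (b : Fin (Tini+N+2*n)) (c : Fin (m+1)),
          w (b, c) * (Fin.cons (εd ((b:ℕ) + (jp:ℕ))) (ud ((b:ℕ) + (jp:ℕ))) : Fin (m+1) → ℝ) c
          = zeta (2*n) (b:ℕ) c * uh ((b:ℕ)+(jp:ℕ)) c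
            - ∑ i ∈ Finset.range (2*n), cc i * (zeta i (b:ℕ) c * uh ((b:ℕ)+(jp:ℕ)) c) := by
        intro b c
        rw [hcons b c]
        simp only [hwdef]
        rw [sub_mul, Finset.sum_mul]
        congr 1
        exact Finset.sum_congr rfl fun i _ => by ring
      calc ∑ b : Fin (Tini+N+2*n), ∑ c : Fin (m+1), w (b, c) *
              (Fin.cons (εd ((b:ℕ) + (jp:ℕ))) (ud ((b:ℕ) + (jp:ℕ))) : Fin (m+1) → ℝ) c
          = ∑ b : Fin (Tini+N+2*n), ∑ c : Fin (m+1),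
              (zeta (2*n) (b:ℕ) c * uh ((b:ℕ)+(jp:ℕ)) c
                - ∑ i ∈ Finset.range (2*n), cc i * (zeta i (b:ℕ) c * uh ((b:ℕ)+(jp:ℕ)) c)) := by
            exact Finset.sum_congr rfl fun b _ => Finset.sum_congr rfl fun c _ => expand b c
        _ = (∑ b : Fin (Tini+N+2*n), ∑ c : Fin (m+1),
              zeta (2*n) (b:ℕ) c * uh ((b:ℕ)+(jp:ℕ)) c)
            - ∑ b : Fin (Tini+N+2*n), ∑ c : Fin (m+1),
                ∑ i ∈ Finset.range (2*n), cc i * (zeta i (b:ℕ) c * uh ((b:ℕ)+(jp:ℕ)) c) := by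
            simp only [Finset.sum_sub_distrib]
        _ = 0 := by
            rw [sub_eq_zero, hcol (2*n) le_rfl]
            have swap1 : ∑ b : Fin (Tini+N+2*n), ∑ c : Fin (m+1),
                ∑ i ∈ Finset.range (2*n), cc i * (zeta i (b:ℕ) c * uh ((b:ℕ)+(jp:ℕ)) c)
              = ∑ i ∈ Finset.range (2*n), cc i * ∑ b : Fin (Tini+N+2*n), ∑ c : Fin (m+1),
                  zeta i (b:ℕ) c * uh ((b:ℕ)+(jp:ℕ)) c := by
              calc ∑ b : Fin (Tini+N+2*n), ∑ c : Fin (m+1),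
                  ∑ i ∈ Finset.range (2*n), cc i * (zeta i (b:ℕ) c * uh ((b:ℕ)+(jp:ℕ)) c)
                  = ∑ b : Fin (Tini+N+2*n), ∑ i ∈ Finset.range (2*n),
                      ∑ c : Fin (m+1), cc i * (zeta i (b:ℕ) c * uh ((b:ℕ)+(jp:ℕ)) c) := by
                    exact Finset.sum_congr rfl fun b _ => Finset.sum_comm
                _ = ∑ i ∈ Finset.range (2*n), ∑ b : Fin (Tini+N+2*n),
                      ∑ c : Fin (m+1), cc i * (zeta i (b:ℕ) c * uh ((b:ℕ)+(jp:ℕ)) c) := by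
                    exact Finset.sum_comm
                _ = ∑ i ∈ Finset.range (2*n), cc i * ∑ b : Fin (Tini+N+2*n),
                      ∑ c : Fin (m+1), zeta i (b:ℕ) c * uh ((b:ℕ)+(jp:ℕ)) c := by
                    refine Finset.sum_congr rfl fun i _ => ?_
                    rw [Finset.mul_sum]
                    exact Finset.sum_congr rfl fun b _ => by rw [Finset.mul_sum]
            rw [swap1]
            have hR : ∑ i ∈ Finset.range (2*n), cc i * ∑ b : Fin (Tini+N+2*n),
                  ∑ c : Fin (m+1), zeta i (b:ℕ) c * uh ((b:ℕ)+(jp:ℕ)) c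
                = ∑ i ∈ Finset.range (2*n), cc i *
                    (-∑ r : Fin (2*n), ηr r * ((A^i).mulVec (xd (jp:ℕ))) r) := by
              refine Finset.sum_congr rfl fun i hi => ?_
              rw [Finset.mem_range] at hi
              rw [hcol i (by omega)]
            rw [hR]
            have hCHs : ∑ r : Fin (2*n), ηr r * ((A^(2*n)).mulVec (xd (jp:ℕ))) r
                = ∑ i ∈ Finset.range (2*n), cc i *
                    ∑ r : Fin (2*n), ηr r * ((A^i).mulVec (xd (jp:ℕ))) r := by
              calc ∑ r : Fin (2*n), ηr r * ((A^(2*n)).mulVec (xd (jp:ℕ))) r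
                  = ∑ r : Fin (2*n), ∑ i ∈ Finset.range (2*n),
                      ηr r * (cc i * ((A^i).mulVec (xd (jp:ℕ))) r) := by
                    refine Finset.sum_congr rfl fun r _ => ?_
                    rw [hCHv (xd (jp:ℕ)) r, Finset.mul_sum]
                _ = ∑ i ∈ Finset.range (2*n), ∑ r : Fin (2*n),
                      ηr r * (cc i * ((A^i).mulVec (xd (jp:ℕ))) r) := Finset.sum_comm
                _ = ∑ i ∈ Finset.range (2*n), cc i *
                      ∑ r : Fin (2*n), ηr r * ((A^i).mulVec (xd (jp:ℕ))) r := by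
                    refine Finset.sum_congr rfl fun i _ => ?_
                    rw [Finset.mul_sum]
                    exact Finset.sum_congr rfl fun r _ => by ring
            rw [hCHs, ← Finset.sum_neg_distrib]
            exact Finset.sum_congr rfl fun i _ => by ring
    have hwz : ∀ b c, b < Tini + N + 2*n →
        zeta (2*n) b c = ∑ i ∈ Finset.range (2*n), cc i * zeta i b c := by
      intro b c hb
      have h1 := congrFun hw0 ((⟨b, hb⟩ : Fin (Tini+N+2*n)), c)
      simp only [hwdef, Pi.zero_apply] at h1
      exact sub_eq_zero.mp h1
    have hdown : ∀ d : ℕ, ∀ b, b < Tini + N + 2*n → Tini + N + 2*n ≤ b + d →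
        ∀ c, zeta (2*n) b c = 0 := by
      intro d
      induction d with
      | zero => intro b hb1 hb2 c; omega
      | succ d IH =>
        intro b hb1 hb2 c
        rw [hwz b c hb1]
        apply Finset.sum_eq_zero
        intro i hi
        rw [Finset.mem_range] at hi
        suffices hzi : zeta i b c = 0 by rw [hzi, mul_zero]
        by_cases hbi : b < i
        · have h1 : zeta i b c = Matrix.vecMul ηr ((A^(i-1-b)) * Bh) c := by
            simp only [hzdef]
            rw [if_pos hbi, if_neg (by omega), add_zero]
          have h2 : zeta (2*n) (b + (2*n - i)) c
              = Matrix.vecMul ηr ((A^(i-1-b)) * Bh) c := by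
            simp only [hzdef]
            rw [if_pos (by omega : b + (2*n - i) < 2*n),
              if_neg (by omega : ¬ 2*n ≤ b + (2*n - i)), add_zero,
              show 2*n - 1 - (b + (2*n - i)) = i - 1 - b by omega]
          rw [h1, ← h2]
          exact IH (b + (2*n - i)) (by omega) (by omega) c
        · push_neg at hbi
          by_cases hbL : b - i < Tini + N
          · have h1 : zeta i b c = ξf (b - i) c := by
              simp only [hzdef]
              rw [if_neg (by omega), if_pos hbi, zero_add]
            have h2 : zeta (2*n) (b - i + 2*n) c = ξf (b - i) c := by
              simp only [hzdef]
              rw [if_neg (by omega : ¬ b - i + 2*n < 2*n),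
                if_pos (by omega : 2*n ≤ b - i + 2*n), zero_add,
                show b - i + 2*n - 2*n = b - i by omega]
            rw [h1, ← h2]
            exact IH (b - i + 2*n) (by omega) (by omega) c
          · simp only [hzdef]
            rw [if_neg (by omega), if_pos hbi, zero_add]
            simp only [hξf]
            rw [dif_neg (by omega)]
    have hz2n : ∀ b, b < Tini + N + 2*n → ∀ c, zeta (2*n) b c = 0 :=
      fun b hb c => hdown (Tini + N + 2*n) b hb (by omega) c
    have hξ0 : ∀ p : Fin (Tini+N) × Fin (m+1), η (Sum.inl p) = 0 := by
      intro p
      have h1 := hz2n ((p.1:ℕ) + 2*n) (by have := p.1.2; omega) p.2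
      simp only [hzdef] at h1
      rw [if_neg (by omega), if_pos (by omega), Nat.add_sub_cancel, zero_add] at h1
      simp only [hξf] at h1
      rw [dif_pos p.1.2] at h1
      simpa using h1
    have hctrb0 : ∀ e, e < 2*n → ∀ c : Fin (m+1),
        Matrix.vecMul ηr ((A^e) * Bh) c = 0 := by
      intro e he c
      have h1 := hz2n (2*n - 1 - e) (by omega) c
      simp only [hzdef] at h1
      rw [if_pos (by omega), if_neg (by omega), add_zero,
        show 2*n - 1 - (2*n - 1 - e) = e by omega] at h1
      exact h1
    have hηr0 : ηr = 0 := by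
      apply aux_vecMul_inj (Matrix.of fun (i : Fin (2*n)) (p : Fin (2*n) × Fin (m+1)) =>
          ((A ^ (p.1 : ℕ)) * Bh) i p.2) (by rw [show (Matrix.of fun (i : Fin (2*n)) (p : Fin (2*n) × Fin (m+1)) =>
          ((A ^ (p.1 : ℕ)) * Bh) i p.2).rank = 2*n from hctrb]; simp) ηr
      funext p
      have h1 := hctrb0 (p.1:ℕ) p.1.2 p.2
      simp only [Matrix.vecMul, dotProduct] at h1 ⊢
      simpa [Matrix.of_apply] using h1
    funext s
    cases s with
    | inl p => exact hξ0 p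
    | inr r => exact congrFun hηr0 r
  obtain ⟨g, hg⟩ := hsurj (Sum.elim
    (fun p => (Fin.cons (ee (p.1:ℕ)) (uu (p.1:ℕ)) : Fin (m+1) → ℝ) p.2)
    (fun r => x 0 r))
  have hgl : ∀ (k : Fin (Tini+N)) (c : Fin (m+1)),
      ∑ j : Fin (T - (Tini+N) + 1), g j * uh ((k:ℕ) + (j:ℕ)) c
        = (Fin.cons (ee (k:ℕ)) (uu (k:ℕ)) : Fin (m+1) → ℝ) c := by
    intro k c
    have := congrFun hg (Sum.inl (k, c))
    simp only [hMbig, Matrix.mulVec, dotProduct, Matrix.of_apply, Sum.elim_inl] at this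
    rw [← this]
    exact Finset.sum_congr rfl fun j _ => mul_comm _ _
  have hge : ∀ k, k < Tini + N → ∑ j : Fin (T - (Tini+N) + 1), g j * εd (k + (j:ℕ)) = ee k := by
    intro k hk
    have := hgl ⟨k, hk⟩ 0
    simpa [huh] using this
  have hgu : ∀ k, k < Tini + N → ∀ i : Fin m,
      ∑ j : Fin (T - (Tini+N) + 1), g j * ud (k + (j:ℕ)) i = uu k i := by
    intro k hk i
    have := hgl ⟨k, hk⟩ i.succ
    simpa [huh] using this
  have hgx : ∀ r, ∑ j : Fin (T - (Tini+N) + 1), g j * xd (j:ℕ) r = x 0 r := by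
    intro r
    have := congrFun hg (Sum.inr r)
    simp only [hMbig, Matrix.mulVec, dotProduct, Matrix.of_apply, Sum.elim_inr] at this
    rw [← this]
    exact Finset.sum_congr rfl fun j _ => mul_comm _ _
  -- the simulated state matches
  have hstate : ∀ k, k < Tini + N → ∀ r,
      ∑ j : Fin (T - (Tini+N) + 1), g j * xd (k + (j:ℕ)) r = x k r := by
    intro k
    induction k with
    | zero => intro _ r; simpa using hgx r
    | succ k IH =>
      intro hk r
      have hk' : k < Tini + N := by omega
      have hT' : ∀ j : Fin (T - (Tini+N) + 1), k + (j:ℕ) + 1 < T := by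
        intro j
        have := j.2
        omega
      have step : ∀ j : Fin (T - (Tini+N) + 1),
          xd (k + 1 + (j:ℕ)) = A.mulVec (xd (k + (j:ℕ))) + Bh.mulVec (uh (k + (j:ℕ))) := by
        intro j
        rw [show k + 1 + (j:ℕ) = (k + (j:ℕ)) + 1 by omega]
        exact hdyn' _ (hT' j)
      have huc : ∀ c : Fin (m+1),
          ∑ j : Fin (T - (Tini+N) + 1), g j * uh (k + (j:ℕ)) c
            = (Fin.cons (ee k) (uu k) : Fin (m+1) → ℝ) c := by
        intro c
        refine Fin.cases ?_ (fun i => ?_) c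
        · simpa [huh] using hge k hk'
        · simpa [huh] using hgu k hk' i
      calc ∑ j : Fin (T - (Tini+N) + 1), g j * xd (k + 1 + (j:ℕ)) r
          = ∑ j : Fin (T - (Tini+N) + 1), g j *
              ((A.mulVec (xd (k + (j:ℕ)))) r + (Bh.mulVec (uh (k + (j:ℕ)))) r) := by
            refine Finset.sum_congr rfl fun j _ => ?_
            rw [step j]
            rfl
        _ = (∑ r' : Fin (2*n), A r r' * ∑ j : Fin (T - (Tini+N) + 1), g j * xd (k + (j:ℕ)) r')
            + (∑ c : Fin (m+1), Bh r c * ∑ j : Fin (T - (Tini+N) + 1), g j * uh (k + (j:ℕ)) c) := by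
            simp only [Matrix.mulVec, dotProduct, mul_add, Finset.sum_add_distrib,
              Finset.mul_sum]
            congr 1
            · rw [Finset.sum_comm]
              refine Finset.sum_congr rfl fun j _ => Finset.sum_congr rfl fun r' _ => by ring
            · rw [Finset.sum_comm]
              refine Finset.sum_congr rfl fun j _ => Finset.sum_congr rfl fun c _ => by ring
        _ = (∑ r' : Fin (2*n), A r r' * x k r')
            + (∑ c : Fin (m+1), Bh r c * (Fin.cons (ee k) (uu k) : Fin (m+1) → ℝ) c) := by
            congr 1
            · exact Finset.sum_congr rfl fun r' _ => by rw [IH hk' r']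
            · exact Finset.sum_congr rfl fun c _ => by rw [huc c]
        _ = x (k+1) r := by
            rw [hxdyn' k hk]
            simp [Matrix.mulVec, dotProduct]
  -- outputs match
  have hy : ∀ k, k < Tini + N → ∀ q : Fin (n+m),
      ∑ j : Fin (T - (Tini+N) + 1), g j * yd (k + (j:ℕ)) q = yy k q := by
    intro k hk q
    have hyd : ∀ j : Fin (T - (Tini+N) + 1), yd (k + (j:ℕ)) = C.mulVec (xd (k + (j:ℕ))) := by
      intro j
      have := j.2
      exact hout _ (by omega)
    calc ∑ j : Fin (T - (Tini+N) + 1), g j * yd (k + (j:ℕ)) q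
        = ∑ r : Fin (2*n), C q r * ∑ j : Fin (T - (Tini+N) + 1), g j * xd (k + (j:ℕ)) r := by
          simp only [Finset.mul_sum]
          rw [Finset.sum_comm]
          refine Finset.sum_congr rfl fun j _ => ?_
          rw [hyd j]
          simp only [Matrix.mulVec, dotProduct, Finset.mul_sum]
          exact Finset.sum_congr rfl fun r _ => by ring
      _ = ∑ r : Fin (2*n), C q r * x k r := by
          exact Finset.sum_congr rfl fun r _ => by rw [hstate k hk r]
      _ = yy k q := by
          rw [hxout k hk]
          simp [Matrix.mulVec, dotProduct]
  -- assemble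
  refine ⟨g, ?_, ?_, ?_, ?_, ?_, ?_⟩
  · funext i
    simp only [Matrix.mulVec, dotProduct, Matrix.of_apply]
    rw [show ∑ j : Fin (T - (Tini+N) + 1), ud ((i.1:ℕ) + (j:ℕ)) i.2 * g j
      = ∑ j : Fin (T - (Tini+N) + 1), g j * ud ((i.1:ℕ) + (j:ℕ)) i.2 from
      Finset.sum_congr rfl fun j _ => mul_comm _ _]
    exact hgu (i.1:ℕ) (by omega) i.2
  · funext i
    simp only [Matrix.mulVec, dotProduct, Matrix.of_apply]
    rw [show ∑ j : Fin (T - (Tini+N) + 1), εd ((i:ℕ) + (j:ℕ)) * g j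
      = ∑ j : Fin (T - (Tini+N) + 1), g j * εd ((i:ℕ) + (j:ℕ)) from
      Finset.sum_congr rfl fun j _ => mul_comm _ _]
    exact hge (i:ℕ) (by omega)
  · funext i
    simp only [Matrix.mulVec, dotProduct, Matrix.of_apply]
    rw [show ∑ j : Fin (T - (Tini+N) + 1), yd ((i.1:ℕ) + (j:ℕ)) i.2 * g j
      = ∑ j : Fin (T - (Tini+N) + 1), g j * yd ((i.1:ℕ) + (j:ℕ)) i.2 from
      Finset.sum_congr rfl fun j _ => mul_comm _ _]
    exact hy (i.1:ℕ) (by omega) i.2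
  · funext i
    simp only [Matrix.mulVec, dotProduct, Matrix.of_apply]
    rw [show ∑ j : Fin (T - (Tini+N) + 1), ud (Tini + (i.1:ℕ) + (j:ℕ)) i.2 * g j
      = ∑ j : Fin (T - (Tini+N) + 1), g j * ud (Tini + (i.1:ℕ) + (j:ℕ)) i.2 from
      Finset.sum_congr rfl fun j _ => mul_comm _ _]
    exact hgu (Tini + (i.1:ℕ)) (by omega) i.2
  · funext i
    simp only [Matrix.mulVec, dotProduct, Matrix.of_apply]
    rw [show ∑ j : Fin (T - (Tini+N) + 1), εd (Tini + (i:ℕ) + (j:ℕ)) * g j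
      = ∑ j : Fin (T - (Tini+N) + 1), g j * εd (Tini + (i:ℕ) + (j:ℕ)) from
      Finset.sum_congr rfl fun j _ => mul_comm _ _]
    exact hge (Tini + (i:ℕ)) (by omega)
  · funext i
    simp only [Matrix.mulVec, dotProduct, Matrix.of_apply]
    rw [show ∑ j : Fin (T - (Tini+N) + 1), yd (Tini + (i.1:ℕ) + (j:ℕ)) i.2 * g j
      = ∑ j : Fin (T - (Tini+N) + 1), g j * yd (Tini + (i.1:ℕ) + (j:ℕ)) i.2 from
      Finset.sum_congr rfl fun j _ => mul_comm _ _]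
    exact hy (Tini + (i.1:ℕ)) (by omega) i.2
end

section
/- Suppose (u^d, ε^d, y^d) is a length-T trajectory of the mixed traffic LTI system, the combined input data û^d(k) = col(ε^d(k), u^d(k)) is persistently exciting of order T_ini + N + 2n, the system is controllable and observable with respect to the combined input, and T_ini ≥ 2n. Partition the Hankel matrices as [U_p; U_f] = H_{T_ini+N}(u^d), [E_p; E_f] = H_{T_ini+N}(ε^d), [Y_p; Y_f] = H_{T_ini+N}(y^d) (past block rows of height T_ini, future block rows of height N). If g₁, g₂ ∈ ℝ^{T−T_ini−N+1} satisfy U_p g₁ = U_p g₂, E_p g₁ = E_p g₂, Y_p g₁ = Y_p g₂, U_f g₁ = U_f g₂, and E_f g₁ = E_f g₂, then Y_f g₁ = Y_f g₂; that is, the future output sequence y is uniquely determined by the past trajectory (u_ini, ε_ini, y_ini) and the future inputs (u, ε). -/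
/-!
STATEMENT 2 (non-parametric representation, Proposition 1, uniqueness part):
Under the same hypotheses as Statement 1 (length-`T` trajectory data of the mixed
traffic LTI system, persistent excitation of the combined input of order
`T_ini + N + 2n`, controllability and observability w.r.t. the combined input), and
additionally `T_ini ≥ 2n`: if `g₁, g₂` give the same products with the past Hankel
blocks `U_p, E_p, Y_p` and the future input blocks `U_f, E_f`, then they give the same
product with `Y_f`; i.e. the future output is uniquely determined by the past
trajectory and the future inputs.
-/

open Matrix BigOperators

theorem deep_lcc_representation_unique
    (n m T Tini N : ℕ) (hTN : Tini + N ≤ T) (hTini : 2*n ≤ Tini)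
    (A : Matrix (Fin (2*n)) (Fin (2*n)) ℝ) (B : Matrix (Fin (2*n)) (Fin m) ℝ)
    (H : Fin (2*n) → ℝ) (C : Matrix (Fin (n+m)) (Fin (2*n)) ℝ)
    (ud : ℕ → Fin m → ℝ) (εd : ℕ → ℝ) (yd : ℕ → Fin (n+m) → ℝ)
    (xd : ℕ → Fin (2*n) → ℝ)
    (hdyn : ∀ k, k + 1 < T →
      xd (k+1) = A.mulVec (xd k) + B.mulVec (ud k) + εd k • H)
    (hout : ∀ k, k < T → yd k = C.mulVec (xd k))
    -- persistent excitation of the combined input data `col(εᵈ, uᵈ)` of order Tini+N+2n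
    (hPE : (Matrix.of fun (i : Fin (Tini + N + 2*n) × Fin (m+1))
        (j : Fin (T - (Tini + N + 2*n) + 1)) =>
        (Fin.cons (εd ((i.1 : ℕ) + (j : ℕ))) (ud ((i.1 : ℕ) + (j : ℕ))) : Fin (m+1) → ℝ) i.2).rank
      = (m+1) * (Tini + N + 2*n))
    -- controllability w.r.t. the combined input: rank [B̂, AB̂, …, A^{2n−1}B̂] = 2n, B̂ = [H B]
    (hctrb : (Matrix.of fun (i : Fin (2*n)) (p : Fin (2*n) × Fin (m+1)) =>
        ((A ^ (p.1 : ℕ)) * Matrix.of (fun i' => (Fin.cons (H i') (B i') : Fin (m+1) → ℝ))) i p.2).rank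
      = 2*n)
    -- observability: rank col(C, CA, …, CA^{2n−1}) = 2n
    (hobsv : (Matrix.of fun (p : Fin (2*n) × Fin (n+m)) (j : Fin (2*n)) =>
        (C * A ^ (p.1 : ℕ)) p.2 j).rank = 2*n)
    (g₁ g₂ : Fin (T - (Tini + N) + 1) → ℝ)
    -- U_p g₁ = U_p g₂
    (hUp : (Matrix.of fun (i : Fin Tini × Fin m) (j : Fin (T - (Tini + N) + 1)) =>
        ud ((i.1 : ℕ) + (j : ℕ)) i.2).mulVec g₁
      = (Matrix.of fun (i : Fin Tini × Fin m) (j : Fin (T - (Tini + N) + 1)) =>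
        ud ((i.1 : ℕ) + (j : ℕ)) i.2).mulVec g₂)
    -- E_p g₁ = E_p g₂
    (hEp : (Matrix.of fun (i : Fin Tini) (j : Fin (T - (Tini + N) + 1)) =>
        εd ((i : ℕ) + (j : ℕ))).mulVec g₁
      = (Matrix.of fun (i : Fin Tini) (j : Fin (T - (Tini + N) + 1)) =>
        εd ((i : ℕ) + (j : ℕ))).mulVec g₂)
    -- Y_p g₁ = Y_p g₂
    (hYp : (Matrix.of fun (i : Fin Tini × Fin (n+m)) (j : Fin (T - (Tini + N) + 1)) =>
        yd ((i.1 : ℕ) + (j : ℕ)) i.2).mulVec g₁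
      = (Matrix.of fun (i : Fin Tini × Fin (n+m)) (j : Fin (T - (Tini + N) + 1)) =>
        yd ((i.1 : ℕ) + (j : ℕ)) i.2).mulVec g₂)
    -- U_f g₁ = U_f g₂
    (hUf : (Matrix.of fun (i : Fin N × Fin m) (j : Fin (T - (Tini + N) + 1)) =>
        ud (Tini + (i.1 : ℕ) + (j : ℕ)) i.2).mulVec g₁
      = (Matrix.of fun (i : Fin N × Fin m) (j : Fin (T - (Tini + N) + 1)) =>
        ud (Tini + (i.1 : ℕ) + (j : ℕ)) i.2).mulVec g₂)
    -- E_f g₁ = E_f g₂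
    (hEf : (Matrix.of fun (i : Fin N) (j : Fin (T - (Tini + N) + 1)) =>
        εd (Tini + (i : ℕ) + (j : ℕ))).mulVec g₁
      = (Matrix.of fun (i : Fin N) (j : Fin (T - (Tini + N) + 1)) =>
        εd (Tini + (i : ℕ) + (j : ℕ))).mulVec g₂) :
    -- then Y_f g₁ = Y_f g₂
    (Matrix.of fun (i : Fin N × Fin (n+m)) (j : Fin (T - (Tini + N) + 1)) =>
        yd (Tini + (i.1 : ℕ) + (j : ℕ)) i.2).mulVec g₁
      = (Matrix.of fun (i : Fin N × Fin (n+m)) (j : Fin (T - (Tini + N) + 1)) =>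
        yd (Tini + (i.1 : ℕ) + (j : ℕ)) i.2).mulVec g₂ := by
  classical
  obtain ⟨δ, hδ⟩ : ∃ δ : Fin (T - (Tini + N) + 1) → ℝ, δ = fun j => g₁ j - g₂ j := ⟨_, rfl⟩
  have comb : ∀ (ι : Type) [Fintype ι] (M : Matrix ι (Fin (T - (Tini + N) + 1)) ℝ),
      M.mulVec g₁ = M.mulVec g₂ → ∀ i, ∑ j, M i j * δ j = 0 := by
    intro ι _ M h i
    have h0 := congrFun h i
    simp only [Matrix.mulVec, dotProduct] at h0
    simp only [hδ, mul_sub, Finset.sum_sub_distrib, h0, sub_self]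
  have hu : ∀ k, k < Tini + N → ∀ i2 : Fin m,
      ∑ j : Fin (T - (Tini + N) + 1), ud (k + (j:ℕ)) i2 * δ j = 0 := by
    intro k hk i2
    rcases lt_or_ge k Tini with h | h
    · exact comb _ _ hUp (⟨k, h⟩, i2)
    · have hk' : k - Tini < N := by omega
      have := comb _ _ hUf (⟨k - Tini, hk'⟩, i2)
      simpa [Nat.add_sub_cancel' h] using this
  have hε : ∀ k, k < Tini + N →
      ∑ j : Fin (T - (Tini + N) + 1), εd (k + (j:ℕ)) * δ j = 0 := by
    intro k hk
    rcases lt_or_ge k Tini with h | h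
    · exact comb _ _ hEp ⟨k, h⟩
    · have hk' : k - Tini < N := by omega
      have := comb _ _ hEf ⟨k - Tini, hk'⟩
      simpa [Nat.add_sub_cancel' h] using this
  have hy : ∀ k, k < Tini → ∀ r : Fin (n+m),
      ∑ j : Fin (T - (Tini + N) + 1), yd (k + (j:ℕ)) r * δ j = 0 := by
    intro k hk r
    exact comb _ _ hYp (⟨k, hk⟩, r)
  -- the combined state trajectory
  obtain ⟨z, hz⟩ : ∃ z : ℕ → Fin (2*n) → ℝ,
      z = fun k => ∑ j : Fin (T - (Tini + N) + 1), δ j • xd (k + (j:ℕ)) := ⟨_, rfl⟩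
  have hu0 : ∀ k, k < Tini + N →
      (∑ j : Fin (T - (Tini + N) + 1), δ j • ud (k + (j:ℕ))) = 0 := by
    intro k hk
    funext i2
    rw [Finset.sum_apply]
    calc ∑ j : Fin (T - (Tini + N) + 1), (δ j • ud (k + (j:ℕ))) i2
        = ∑ j : Fin (T - (Tini + N) + 1), ud (k + (j:ℕ)) i2 * δ j := by
          refine Finset.sum_congr rfl fun j _ => ?_
          simp [mul_comm]
      _ = 0 := hu k hk i2
  have hε0 : ∀ k, k < Tini + N →
      (∑ j : Fin (T - (Tini + N) + 1), δ j * εd (k + (j:ℕ))) = 0 := by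
    intro k hk
    calc ∑ j : Fin (T - (Tini + N) + 1), δ j * εd (k + (j:ℕ))
        = ∑ j : Fin (T - (Tini + N) + 1), εd (k + (j:ℕ)) * δ j := by
          refine Finset.sum_congr rfl fun j _ => ?_; ring
      _ = 0 := hε k hk
  -- state recursion for z
  have hdynz : ∀ k, k + 1 < Tini + N → z (k + 1) = A.mulVec (z k) := by
    intro k hk
    have h1 : z (k + 1) = ∑ j : Fin (T - (Tini + N) + 1), δ j •
        (A.mulVec (xd (k + (j:ℕ))) + B.mulVec (ud (k + (j:ℕ))) + εd (k + (j:ℕ)) • H) := by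
      simp only [hz]
      refine Finset.sum_congr rfl fun j _ => ?_
      have e : k + 1 + (j:ℕ) = (k + (j:ℕ)) + 1 := by omega
      rw [e, hdyn (k + (j:ℕ)) (by have := j.isLt; omega)]
    have h2 : A.mulVec (z k) = ∑ j : Fin (T - (Tini + N) + 1),
        δ j • A.mulVec (xd (k + (j:ℕ))) := by
      show A.mulVecLin (z k) = _
      simp only [hz]
      rw [map_sum]
      simp [Matrix.mulVecLin_apply]
    rw [h1, h2]
    have hsplit : ∀ j : Fin (T - (Tini + N) + 1),
        δ j • (A.mulVec (xd (k + (j:ℕ))) + B.mulVec (ud (k + (j:ℕ))) + εd (k + (j:ℕ)) • H)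
        = δ j • A.mulVec (xd (k + (j:ℕ))) + B.mulVec (δ j • ud (k + (j:ℕ)))
          + (δ j * εd (k + (j:ℕ))) • H := by
      intro j
      rw [smul_add, smul_add, Matrix.mulVec_smul, smul_smul]
    simp only [hsplit]
    rw [Finset.sum_add_distrib, Finset.sum_add_distrib]
    have hB : ∑ j : Fin (T - (Tini + N) + 1), B.mulVec (δ j • ud (k + (j:ℕ)))
        = B.mulVec (∑ j : Fin (T - (Tini + N) + 1), δ j • ud (k + (j:ℕ))) := by
      show ∑ j : Fin (T - (Tini + N) + 1), B.mulVecLin (δ j • ud (k + (j:ℕ))) = B.mulVecLin _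
      rw [map_sum]
    rw [hB, hu0 k (by omega), Matrix.mulVec_zero, ← Finset.sum_smul, hε0 k (by omega),
      zero_smul, add_zero, add_zero]
  have hzpow : ∀ k, k < Tini + N → z k = (A ^ k).mulVec (z 0) := by
    intro k
    induction k with
    | zero => intro _; rw [pow_zero, Matrix.one_mulVec]
    | succ k ih =>
      intro hk
      rw [hdynz k hk, ih (by omega), Matrix.mulVec_mulVec, ← pow_succ']
  -- output of z
  have hCz : ∀ k, k + (T - (Tini + N)) < T → ∀ r : Fin (n+m),
      (C.mulVec (z k)) r = ∑ j : Fin (T - (Tini + N) + 1), yd (k + (j:ℕ)) r * δ j := by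
    intro k hk r
    have h1 : C.mulVec (z k) = ∑ j : Fin (T - (Tini + N) + 1),
        δ j • C.mulVec (xd (k + (j:ℕ))) := by
      show C.mulVecLin (z k) = _
      simp only [hz]
      rw [map_sum]
      simp [Matrix.mulVecLin_apply]
    rw [h1, Finset.sum_apply]
    refine Finset.sum_congr rfl fun j _ => ?_
    rw [← hout (k + (j:ℕ)) (by have := j.isLt; omega)]
    simp [mul_comm]
  have hzy : ∀ k, k < Tini → C.mulVec (z k) = 0 := by
    intro k hk
    funext r
    rw [hCz k (by omega) r]
    simpa using hy k hk r
  -- observability kills z 0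
  have hz0 : z 0 = 0 := by
    have hOv : (Matrix.of fun (p : Fin (2*n) × Fin (n+m)) (j : Fin (2*n)) =>
        (C * A ^ ((p.1 : ℕ))) p.2 j).mulVec (z 0) = 0 := by
      funext p
      have hk1 : (p.1 : ℕ) < Tini := by have := p.1.isLt; omega
      have h1 : C.mulVec ((A ^ ((p.1 : ℕ))).mulVec (z 0)) = 0 := by
        rw [← hzpow _ (by omega)]
        exact hzy _ hk1
      have h2 : ((C * A ^ ((p.1 : ℕ))).mulVec (z 0)) p.2 = 0 := by
        rw [← Matrix.mulVec_mulVec, h1]; rfl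
      exact h2
    have hfd := LinearMap.finrank_range_add_finrank_ker
      (Matrix.mulVecLin (Matrix.of fun (p : Fin (2*n) × Fin (n+m)) (j : Fin (2*n)) =>
        (C * A ^ ((p.1 : ℕ))) p.2 j))
    have hpi : Module.finrank ℝ (Fin (2*n) → ℝ) = 2*n := by
      rw [Module.finrank_pi, Fintype.card_fin]
    rw [hpi] at hfd
    have hrk : Module.finrank ℝ (LinearMap.range
        (Matrix.mulVecLin (Matrix.of fun (p : Fin (2*n) × Fin (n+m)) (j : Fin (2*n)) =>
          (C * A ^ ((p.1 : ℕ))) p.2 j))) = 2*n := hobsv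
    have hker0 : Module.finrank ℝ (LinearMap.ker
        (Matrix.mulVecLin (Matrix.of fun (p : Fin (2*n) × Fin (n+m)) (j : Fin (2*n)) =>
          (C * A ^ ((p.1 : ℕ))) p.2 j))) = 0 := by omega
    have hker := Submodule.finrank_eq_zero.1 hker0
    have hmem : z 0 ∈ LinearMap.ker
        (Matrix.mulVecLin (Matrix.of fun (p : Fin (2*n) × Fin (n+m)) (j : Fin (2*n)) =>
          (C * A ^ ((p.1 : ℕ))) p.2 j)) := by
      rw [LinearMap.mem_ker, Matrix.mulVecLin_apply]
      exact hOv
    rw [hker, Submodule.mem_bot] at hmem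
    exact hmem
  -- conclusion
  funext p
  have key : ∑ j : Fin (T - (Tini + N) + 1), yd (Tini + ((p.1 : ℕ)) + (j:ℕ)) p.2 * δ j = 0 := by
    have hzz : z (Tini + (p.1 : ℕ)) = 0 := by
      rw [hzpow _ (by have := p.1.isLt; omega), hz0, Matrix.mulVec_zero]
    rw [← hCz (Tini + (p.1 : ℕ)) (by have := p.1.isLt; omega) p.2, hzz, Matrix.mulVec_zero]
    rfl
  show _ = _
  simp only [Matrix.mulVec, dotProduct, Matrix.of_apply]
  rw [← sub_eq_zero, ← Finset.sum_sub_distrib]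
  calc ∑ j : Fin (T - (Tini + N) + 1), (yd (Tini + ((p.1 : ℕ)) + (j:ℕ)) p.2 * g₁ j
        - yd (Tini + ((p.1 : ℕ)) + (j:ℕ)) p.2 * g₂ j)
      = ∑ j : Fin (T - (Tini + N) + 1), yd (Tini + ((p.1 : ℕ)) + (j:ℕ)) p.2 * δ j := by
        refine Finset.sum_congr rfl fun j _ => ?_
        simp only [hδ]; ring
    _ = 0 := key
end

section
/- Consider an observable mixed traffic LTI system with T_ini ≥ 2n. For any fixed past trajectory data (u_ini, ε_ini, y_ini) of length T_ini and fixed future input sequences (u, ε) of length N, there is at most one future output sequence y of length N such that col(u_ini, ε_ini, y_ini, u, ε, y) is a length-(T_ini + N) trajectory of the system. Equivalently: if two state sequences x, x' both satisfy the system dynamics under the same inputs (u_ini, ε_ini, u, ε) and produce the same outputs during the first T_ini steps, then they produce the same outputs during the remaining N steps. -/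
/-!
STATEMENT 3: For an observable mixed traffic LTI system
`x(k+1) = A x(k) + B u(k) + H ε(k)`, `y(k) = C x(k)` (state dim `2n`) with
`T_ini ≥ 2n`, the future output over the last `N` steps of a length-`(T_ini + N)`
trajectory is uniquely determined by the past data and the future inputs:
if two state sequences `x, x'` satisfy the dynamics under the same inputs `(u, ε)` over
the horizon `T_ini + N` and produce the same outputs during the first `T_ini` steps,
then they produce the same outputs during all `T_ini + N` steps (in particular during
the remaining `N` steps).
-/

open Matrix

theorem mixed_traffic_future_output_unique
    (n m Tini N : ℕ) (hTini : 2*n ≤ Tini)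
    (A : Matrix (Fin (2*n)) (Fin (2*n)) ℝ) (B : Matrix (Fin (2*n)) (Fin m) ℝ)
    (H : Fin (2*n) → ℝ) (C : Matrix (Fin (n+m)) (Fin (2*n)) ℝ)
    -- observability: rank col(C, CA, …, CA^{2n−1}) = 2n
    (hobsv : (Matrix.of fun (p : Fin (2*n) × Fin (n+m)) (j : Fin (2*n)) =>
        (C * A ^ (p.1 : ℕ)) p.2 j).rank = 2*n)
    (u : ℕ → Fin m → ℝ) (ε : ℕ → ℝ)
    (x x' : ℕ → Fin (2*n) → ℝ)
    (hx : ∀ k, k + 1 < Tini + N →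
      x (k+1) = A.mulVec (x k) + B.mulVec (u k) + ε k • H)
    (hx' : ∀ k, k + 1 < Tini + N →
      x' (k+1) = A.mulVec (x' k) + B.mulVec (u k) + ε k • H)
    (hy : ∀ k, k < Tini → C.mulVec (x k) = C.mulVec (x' k)) :
    ∀ k, k < Tini + N → C.mulVec (x k) = C.mulVec (x' k) := by
  -- the difference evolves as d(k) = A^k d(0)
  have hd : ∀ k, k < Tini + N → x k - x' k = (A ^ k).mulVec (x 0 - x' 0) := by
    intro k
    induction k with
    | zero => intro _; simp
    | succ k ih =>
      intro hk
      have hk' : k < Tini + N := Nat.lt_of_succ_lt hk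
      have h1 := hx k hk
      have h2 := hx' k hk
      have : x (k+1) - x' (k+1) = A.mulVec (x k - x' k) := by
        rw [h1, h2, Matrix.mulVec_sub]
        abel
      rw [this, ih hk', Matrix.mulVec_mulVec, ← pow_succ']
  set M : Matrix (Fin (2*n) × Fin (n+m)) (Fin (2*n)) ℝ :=
    Matrix.of fun (p : Fin (2*n) × Fin (n+m)) (j : Fin (2*n)) =>
      (C * A ^ (p.1 : ℕ)) p.2 j with hM
  -- M maps d0 to zero
  have hMd : M.mulVec (x 0 - x' 0) = 0 := by
    funext p
    have hp1 : (p.1 : ℕ) < Tini + N :=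
      lt_of_lt_of_le p.1.2 (le_trans hTini (Nat.le_add_right _ _))
    have hy0 : C.mulVec (x (p.1 : ℕ) - x' (p.1 : ℕ)) = 0 := by
      rw [Matrix.mulVec_sub, hy _ (lt_of_lt_of_le p.1.2 hTini), sub_self]
    have hrow : M.mulVec (x 0 - x' 0) p
        = (C.mulVec ((A ^ (p.1 : ℕ)).mulVec (x 0 - x' 0))) p.2 := by
      simp [hM, Matrix.mulVec, dotProduct, Matrix.mul_apply, Finset.sum_mul,
        Finset.mul_sum, mul_assoc]
      rw [Finset.sum_comm]
    rw [hrow, ← hd _ hp1, hy0]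
    rfl
  -- injectivity from full column rank
  have hker : ∀ v : Fin (2*n) → ℝ, M.mulVec v = 0 → v = 0 := by
    have hrank : M.rank = 2*n := hobsv
    have h1 : LinearMap.ker M.mulVecLin = ⊥ := by
      have hfr : Module.finrank ℝ (LinearMap.range M.mulVecLin)
          + Module.finrank ℝ (LinearMap.ker M.mulVecLin)
          = Module.finrank ℝ (Fin (2*n) → ℝ) :=
        LinearMap.finrank_range_add_finrank_ker M.mulVecLin
      have hdom : Module.finrank ℝ (Fin (2*n) → ℝ) = 2*n := by
        simp
      rw [hdom] at hfr
      have : Module.finrank ℝ (LinearMap.range M.mulVecLin) = 2*n := hrank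
      rw [this] at hfr
      have hz : Module.finrank ℝ (LinearMap.ker M.mulVecLin) = 0 := by omega
      exact Submodule.finrank_eq_zero.mp hz
    intro v hv
    have : v ∈ LinearMap.ker M.mulVecLin := by
      simpa [Matrix.mulVecLin_apply] using hv
    rw [h1] at this
    simpa using this
  have hd0 : x 0 - x' 0 = 0 := hker _ hMd
  intro k hk
  have : x k - x' k = 0 := by rw [hd k hk, hd0, Matrix.mulVec_zero]
  have hxe : x k = x' k := sub_eq_zero.mp this
  rw [hxe]
end

section
/- (Willems' fundamental lemma, rank form, as used to establish the DeeP-LCC representation.) Let x(k+1) = A x(k) + B u(k) be a discrete-time LTI system with state dimension n_x and input dimension m, and assume the pair (A, B) is controllable, i.e., the controllability matrix [B, AB, …, A^{n_x−1}B] has rank n_x. Let (u^d, x^d) be an input/state trajectory of the system of length T, and let L ≥ 1. If u^d is persistently exciting of order L + n_x, then the stacked matrix [X_p; H_L(u^d)], where X_p = [x^d(1), x^d(2), …, x^d(T−L+1)] ∈ ℝ^{n_x×(T−L+1)}, has full row rank n_x + mL. -/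
/-!
STATEMENT 5 (Willems' fundamental lemma, rank form): For a controllable discrete-time
LTI system `x(k+1) = A x(k) + B u(k)` (state dim `nx`, input dim `m`), an input/state
trajectory `(uᵈ, xᵈ)` of length `T`, and `L ≥ 1`: if `uᵈ` is persistently exciting of
order `L + nx` (its order-`(L+nx)` Hankel matrix has full row rank `m(L+nx)`), then
the stacked matrix `[X_p; H_L(uᵈ)]`, where `X_p = [xᵈ(1), …, xᵈ(T−L+1)]`, has full row
rank `nx + mL`.
-/

open Matrix Finset

lemma rank_eq_card_iff_vecMul_injective {ι κ : Type*} [Fintype ι] [Fintype κ]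
    [DecidableEq ι] (M : Matrix ι κ ℝ) :
    M.rank = Fintype.card ι ↔ ∀ v : ι → ℝ, M.vecMul v = 0 → v = 0 := by
  have h1 : M.rank = Module.finrank ℝ (LinearMap.range (Mᵀ.mulVecLin)) := by
    rw [← Matrix.rank_transpose, Matrix.rank]
  have h2 := LinearMap.finrank_range_add_finrank_ker (Mᵀ.mulVecLin)
  have h3 : Module.finrank ℝ (ι → ℝ) = Fintype.card ι := Module.finrank_pi ℝ
  constructor
  · intro hrank v hv
    have hker : Module.finrank ℝ (LinearMap.ker (Mᵀ.mulVecLin)) = 0 := by omega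
    have hbot : LinearMap.ker (Mᵀ.mulVecLin) = ⊥ := Submodule.finrank_eq_zero.mp hker
    have : v ∈ LinearMap.ker (Mᵀ.mulVecLin) := by
      simp [LinearMap.mem_ker, Matrix.mulVecLin_apply, Matrix.mulVec_transpose, hv]
    rw [hbot] at this; simpa using this
  · intro hv
    have hbot : LinearMap.ker (Mᵀ.mulVecLin) = ⊥ := by
      rw [LinearMap.ker_eq_bot']
      intro v hv'
      exact hv v (by simpa [Matrix.mulVecLin_apply, Matrix.mulVec_transpose] using hv')
    have hker : Module.finrank ℝ (LinearMap.ker (Mᵀ.mulVecLin)) = 0 := by rw [hbot]; simp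
    omega

lemma sum_range_add'' {M : Type*} [AddCommMonoid M] (f : ℕ → M) (a b : ℕ) :
    ∑ i ∈ Finset.range (a+b), f i
      = ∑ i ∈ Finset.range a, f i + ∑ i ∈ Finset.range b, f (a+i) := by
  induction b with
  | zero => simp
  | succ b ih => rw [Nat.add_succ, Finset.sum_range_succ, Finset.sum_range_succ, ih, add_assoc]

lemma sum_dot {ι κ : Type*} [Fintype ι] (F : Finset κ) (f : κ → ι → ℝ) (w : ι → ℝ) :
    (∑ s ∈ F, f s) ⬝ᵥ w = ∑ s ∈ F, (f s ⬝ᵥ w) := by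
  simp only [dotProduct, Finset.sum_apply, Finset.sum_mul]
  exact Finset.sum_comm

lemma dot_sum {ι κ : Type*} [Fintype ι] (v : ι → ℝ) (F : Finset κ) (g : κ → ι → ℝ) :
    v ⬝ᵥ (∑ t ∈ F, g t) = ∑ t ∈ F, (v ⬝ᵥ g t) := by
  simp only [dotProduct, Finset.sum_apply, Finset.mul_sum]
  exact Finset.sum_comm

lemma mulVec_sum' {ι κ σ : Type*} [Fintype κ] (A : Matrix ι κ ℝ) (F : Finset σ) (g : σ → κ → ℝ) :
    A *ᵥ (∑ t ∈ F, g t) = ∑ t ∈ F, A *ᵥ g t := by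
  funext i
  simp only [Matrix.mulVec, dotProduct, Finset.sum_apply, Finset.mul_sum]
  exact Finset.sum_comm

lemma vecMul_sum_smul {ι κ σ : Type*} [Fintype ι] (v : ι → ℝ) (F : Finset σ)
    (c : σ → ℝ) (M : σ → Matrix ι κ ℝ) :
    v ᵥ* (∑ s ∈ F, c s • M s) = ∑ s ∈ F, c s • (v ᵥ* M s) := by
  funext j
  simp only [Matrix.vecMul, dotProduct, Finset.sum_apply, Matrix.sum_apply,
    Matrix.smul_apply, smul_eq_mul, Pi.smul_apply, Finset.mul_sum]
  rw [Finset.sum_comm]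
  exact Finset.sum_congr rfl fun s _ => Finset.sum_congr rfl fun i _ => by ring

lemma rollout {nx m : ℕ} (T : ℕ) (A : Matrix (Fin nx) (Fin nx) ℝ) (B : Matrix (Fin nx) (Fin m) ℝ)
    (ud : ℕ → Fin m → ℝ) (xd : ℕ → Fin nx → ℝ)
    (hdyn : ∀ k, k + 1 < T → xd (k+1) = A *ᵥ (xd k) + B *ᵥ (ud k)) :
    ∀ s j, j + s < T → xd (j+s)
      = (A^s) *ᵥ xd j + ∑ t ∈ Finset.range s, ((A^(s-1-t)) * B) *ᵥ ud (t+j) := by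
  intro s
  induction s with
  | zero => intro j _; simp [Matrix.one_mulVec]
  | succ s ih =>
    intro j hj
    have h1 : j + s < T := by omega
    have h2 : j + s + 1 < T := by omega
    have hx : xd (j + (s+1)) = A *ᵥ xd (j+s) + B *ᵥ ud (j+s) := by
      have := hdyn (j+s) h2
      rw [show j + (s+1) = (j+s)+1 by omega]
      exact this
    rw [hx, ih j h1, Matrix.mulVec_add, Matrix.mulVec_mulVec, ← pow_succ', mulVec_sum',
      Finset.sum_range_succ, add_assoc]
    congr 1
    congr 1
    · apply Finset.sum_congr rfl
      intro t ht
      have ht' : t < s := Finset.mem_range.mp ht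
      rw [Matrix.mulVec_mulVec, ← Matrix.mul_assoc, show s + 1 - 1 - t = (s - 1 - t) + 1 by omega,
        pow_succ']
    · rw [show s + 1 - 1 - s = 0 by omega, pow_zero, Matrix.one_mul,
        show j + s = s + j by omega]

theorem willems_fundamental_lemma_rank
    (nx m T L : ℕ) (hL : 1 ≤ L)
    (A : Matrix (Fin nx) (Fin nx) ℝ) (B : Matrix (Fin nx) (Fin m) ℝ)
    -- controllability: rank [B, AB, …, A^{nx−1}B] = nx
    (hctrb : (Matrix.of fun (i : Fin nx) (q : Fin nx × Fin m) =>
        ((A ^ (q.1 : ℕ)) * B) i q.2).rank = nx)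
    (ud : ℕ → Fin m → ℝ) (xd : ℕ → Fin nx → ℝ)
    (hdyn : ∀ k, k + 1 < T → xd (k+1) = A.mulVec (xd k) + B.mulVec (ud k))
    -- persistent excitation of uᵈ of order L + nx
    (hPE : (Matrix.of fun (i : Fin (L + nx) × Fin m) (j : Fin (T - (L + nx) + 1)) =>
        ud ((i.1 : ℕ) + (j : ℕ)) i.2).rank = m * (L + nx)) :
    -- rank [X_p ; H_L(uᵈ)] = nx + mL
    (Matrix.of fun (i : Fin nx ⊕ (Fin L × Fin m)) (j : Fin (T - L + 1)) =>
        Sum.elim (fun s => xd (j : ℕ) s)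
          (fun q => ud ((q.1 : ℕ) + (j : ℕ)) q.2) i).rank = nx + m * L := by
  classical
  -- injectivity of the PE matrix's left multiplication
  have hPEinj : ∀ v : Fin (L + nx) × Fin m → ℝ,
      (Matrix.of fun (i : Fin (L + nx) × Fin m) (j : Fin (T - (L + nx) + 1)) =>
        ud ((i.1 : ℕ) + (j : ℕ)) i.2).vecMul v = 0 → v = 0 := by
    apply (rank_eq_card_iff_vecMul_injective _).mp
    rw [hPE, Fintype.card_prod, Fintype.card_fin, Fintype.card_fin, mul_comm]
  rcases Nat.eq_zero_or_pos nx with h0 | hnx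
  · -- degenerate case nx = 0 : the statement is just persistency of excitation
    subst h0
    have hcard : 0 + m * L = Fintype.card (Fin 0 ⊕ (Fin L × Fin m)) := by
      simp [mul_comm]
    rw [hcard]
    apply (rank_eq_card_iff_vecMul_injective _).mpr
    intro y hy
    have h0' : (fun (i : Fin (L + 0) × Fin m) => y (Sum.inr i)) = 0 := by
      apply hPEinj
      funext j
      have := congrFun hy j
      simpa [Matrix.vecMul, dotProduct, Fintype.sum_sum_type] using this
    funext i
    rcases i with s | i
    · exact s.elim0
    · exact congrFun h0' i
  -- main case : nx ≥ 1
  have hm : 1 ≤ m := by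
    by_contra hm0
    have hm0 : m = 0 := by omega
    have := Matrix.rank_le_card_width (Matrix.of fun (i : Fin nx) (q : Fin nx × Fin m) =>
        ((A ^ (q.1 : ℕ)) * B) i q.2)
    rw [hctrb, Fintype.card_prod, Fintype.card_fin, Fintype.card_fin, hm0] at this
    omega
  have hT : L + nx + 1 ≤ T := by
    have h1 := Matrix.rank_le_card_width (Matrix.of fun (i : Fin (L + nx) × Fin m)
        (j : Fin (T - (L + nx) + 1)) => ud ((i.1 : ℕ) + (j : ℕ)) i.2)
    rw [hPE, Fintype.card_fin] at h1
    have h2 : L + nx ≤ m * (L + nx) := Nat.le_mul_of_pos_left _ hm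
    omega
  have hctrbinj : ∀ v : Fin nx → ℝ,
      (Matrix.of fun (i : Fin nx) (q : Fin nx × Fin m) =>
        ((A ^ (q.1 : ℕ)) * B) i q.2).vecMul v = 0 → v = 0 := by
    apply (rank_eq_card_iff_vecMul_injective _).mp
    rw [hctrb, Fintype.card_fin]
  have hcard : nx + m * L = Fintype.card (Fin nx ⊕ (Fin L × Fin m)) := by
    simp [mul_comm]
  rw [hcard]
  apply (rank_eq_card_iff_vecMul_injective _).mpr
  intro y hy
  set ξ : Fin nx → ℝ := fun s => y (Sum.inl s) with hξdef
  set ηN : ℕ → Fin m → ℝ :=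
    fun k => if h : k < L then (fun r => y (Sum.inr (⟨k, h⟩, r))) else 0 with hηdef
  set c : ℕ → ℝ := fun i => (Matrix.charpoly A).coeff i with hcdef
  set V : ℕ → ℕ → Fin m → ℝ :=
    fun s p => if p < s then ξ ᵥ* ((A ^ (s - 1 - p)) * B) else ηN (p - s) with hVdef
  set w : ℕ → Fin m → ℝ := fun p => ∑ s ∈ Finset.range (nx + 1), c s • V s p with hwdef
  -- the basic kernel relation, column by column
  have hB : ∀ j, j ≤ T - L →
      ξ ⬝ᵥ xd j + ∑ k ∈ Finset.range L, ηN k ⬝ᵥ ud (k + j) = 0 := by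
    intro j hj
    have hcol := congrFun hy ⟨j, by omega⟩
    simp only [Matrix.vecMul, dotProduct, Matrix.of_apply, Pi.zero_apply,
      Fintype.sum_sum_type, Sum.elim_inl, Sum.elim_inr, Fintype.sum_prod_type] at hcol
    rw [show (ξ ⬝ᵥ xd j) = ∑ s : Fin nx, y (Sum.inl s) * xd j s from rfl]
    have hsum : ∑ k ∈ Finset.range L, ηN k ⬝ᵥ ud (k + j)
        = ∑ k : Fin L, ∑ r : Fin m, y (Sum.inr (k, r)) * ud (↑k + j) r := by
      rw [← Fin.sum_univ_eq_sum_range (fun k => ηN k ⬝ᵥ ud (k + j)) L]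
      apply Finset.sum_congr rfl
      intro k _
      simp only [hηdef, k.isLt, dif_pos, Fin.eta, dotProduct]
    rw [hsum]
    exact hcol
  -- the combined relation using the system dynamics
  have hC : ∀ s, s ≤ nx → ∀ j, j ≤ T - (L + nx) →
      ∑ p ∈ Finset.range (L + nx), V s p ⬝ᵥ ud (p + j) = -((ξ ᵥ* (A ^ s)) ⬝ᵥ xd j) := by
    intro s hs j hj
    rw [show L + nx = s + (L + (nx - s)) by omega,
      sum_range_add'' (fun p => V s p ⬝ᵥ ud (p + j)) s (L + (nx - s)),
      sum_range_add'' (fun i => V s (s + i) ⬝ᵥ ud ((s + i) + j)) L (nx - s)]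
    have e1 : ∑ p ∈ Finset.range s, V s p ⬝ᵥ ud (p + j)
        = ∑ p ∈ Finset.range s, (ξ ᵥ* ((A ^ (s - 1 - p)) * B)) ⬝ᵥ ud (p + j) := by
      refine Finset.sum_congr rfl fun p hp => ?_
      have hp' : p < s := Finset.mem_range.mp hp
      rw [hVdef]
      simp only [if_pos hp']
    have e2 : ∑ k ∈ Finset.range L, V s (s + k) ⬝ᵥ ud ((s + k) + j)
        = ∑ k ∈ Finset.range L, ηN k ⬝ᵥ ud (k + (j + s)) := by
      refine Finset.sum_congr rfl fun k hk => ?_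
      rw [hVdef]
      simp only [if_neg (by omega : ¬ s + k < s)]
      rw [show s + k - s = k by omega, show s + k + j = k + (j + s) by omega]
    have e3 : ∑ e ∈ Finset.range (nx - s), V s (s + (L + e)) ⬝ᵥ ud ((s + (L + e)) + j) = 0 := by
      refine Finset.sum_eq_zero fun e he => ?_
      rw [hVdef]
      simp only [if_neg (by omega : ¬ s + (L + e) < s)]
      rw [hηdef]
      simp only [dif_neg (by omega : ¬ s + (L + e) - s < L)]
      exact zero_dotProduct _
    have hBs := hB (j + s) (by omega)
    have hroll := rollout T A B ud xd hdyn s j (by omega)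
    have e4 : ξ ⬝ᵥ xd (j + s)
        = (ξ ᵥ* (A ^ s)) ⬝ᵥ xd j
          + ∑ t ∈ Finset.range s, (ξ ᵥ* ((A ^ (s - 1 - t)) * B)) ⬝ᵥ ud (t + j) := by
      rw [hroll, dotProduct_add, Matrix.dotProduct_mulVec, dot_sum]
      congr 1
      exact Finset.sum_congr rfl fun t _ => Matrix.dotProduct_mulVec _ _ _
    rw [e1, e2, e3]
    linarith [hBs, e4]
  -- the Cayley–Hamilton combination annihilates the deep Hankel matrix
  have hCH : ∑ s ∈ Finset.range (nx + 1), c s • (A ^ s) = 0 := by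
    have h1 := Matrix.aeval_self_charpoly A
    rw [Polynomial.aeval_eq_sum_range, Matrix.charpoly_natDegree_eq_dim,
      Fintype.card_fin] at h1
    exact h1
  have hcnx : c nx = 1 := by
    have h1 := (Matrix.charpoly_monic A).coeff_natDegree
    rwa [Matrix.charpoly_natDegree_eq_dim, Fintype.card_fin] at h1
  have hw0 : ∀ p, p < L + nx → w p = 0 := by
    have hker : (fun (i : Fin (L + nx) × Fin m) => w i.1 i.2) = 0 := by
      apply hPEinj
      funext j
      have hj : (j : ℕ) ≤ T - (L + nx) := by omega
      have hcol : ∑ p ∈ Finset.range (L + nx), w p ⬝ᵥ ud (p + (j : ℕ)) = 0 := by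
        have h1 : ∀ p, w p ⬝ᵥ ud (p + (j : ℕ))
            = ∑ s ∈ Finset.range (nx + 1), c s * (V s p ⬝ᵥ ud (p + (j : ℕ))) := by
          intro p
          rw [hwdef]
          rw [sum_dot]
          exact Finset.sum_congr rfl fun s _ => by
            rw [smul_dotProduct, smul_eq_mul]
        calc ∑ p ∈ Finset.range (L + nx), w p ⬝ᵥ ud (p + (j : ℕ))
            = ∑ p ∈ Finset.range (L + nx), ∑ s ∈ Finset.range (nx + 1),
                c s * (V s p ⬝ᵥ ud (p + (j : ℕ))) := Finset.sum_congr rfl fun p _ => h1 p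
          _ = ∑ s ∈ Finset.range (nx + 1), c s *
                (∑ p ∈ Finset.range (L + nx), V s p ⬝ᵥ ud (p + (j : ℕ))) := by
              rw [Finset.sum_comm]
              exact Finset.sum_congr rfl fun s _ => by rw [Finset.mul_sum]
          _ = ∑ s ∈ Finset.range (nx + 1), c s * (-((ξ ᵥ* (A ^ s)) ⬝ᵥ xd (j : ℕ))) := by
              refine Finset.sum_congr rfl fun s hs => ?_
              have hs' : s ≤ nx := Nat.lt_succ_iff.mp (Finset.mem_range.mp hs)
              rw [hC s hs' (j : ℕ) hj]
          _ = -((∑ s ∈ Finset.range (nx + 1), c s • (ξ ᵥ* (A ^ s))) ⬝ᵥ xd (j : ℕ)) := by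
              rw [sum_dot]
              rw [← Finset.sum_neg_distrib]
              refine Finset.sum_congr rfl fun s _ => ?_
              rw [smul_dotProduct, smul_eq_mul]
              ring
          _ = 0 := by
              rw [← vecMul_sum_smul, hCH, Matrix.vecMul_zero, zero_dotProduct, neg_zero]
      simp only [Matrix.vecMul, dotProduct, Matrix.of_apply, Pi.zero_apply,
        Fintype.sum_prod_type]
      rw [← Fin.sum_univ_eq_sum_range
        (fun p => w p ⬝ᵥ ud (p + (j : ℕ))) (L + nx)] at hcol
      simpa [dotProduct] using hcol
    intro p hp
    funext r
    exact congrFun hker (⟨p, hp⟩, r)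
  -- the input part of the kernel vector vanishes
  have hη : ∀ k, ηN k = 0 := by
    have key : ∀ d k, L ≤ k + d → ηN k = 0 := by
      intro d
      induction d with
      | zero =>
        intro k hk
        rw [hηdef]
        exact dif_neg (by omega)
      | succ d ih =>
        intro k hk
        by_cases hkL : L ≤ k
        · rw [hηdef]; exact dif_neg (by omega)
        · push_neg at hkL
          have hw := hw0 (nx + k) (by omega)
          funext r
          have h1 := congrFun hw r
          rw [hwdef] at h1
          simp only [Finset.sum_apply, Pi.smul_apply, smul_eq_mul] at h1
          rw [Finset.sum_range_succ] at h1
          have h2 : ∀ s ∈ Finset.range nx, c s * V s (nx + k) r = 0 := by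
            intro s hs
            have hs' : s < nx := Finset.mem_range.mp hs
            rw [hVdef]
            simp only [if_neg (by omega : ¬ nx + k < s)]
            rw [ih (nx + k - s) (by omega)]
            simp
          rw [Finset.sum_congr rfl h2, Finset.sum_const_zero, zero_add, hcnx, one_mul] at h1
          rw [hVdef] at h1
          simp only [if_neg (by omega : ¬ nx + k < nx)] at h1
          rw [show nx + k - nx = k by omega] at h1
          exact h1
    exact fun k => key L k (by omega)
  -- the state part of the kernel vector vanishes, via controllability
  have hg : ∀ t, t < nx → ξ ᵥ* ((A ^ t) * B) = 0 := by
    intro t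
    induction t using Nat.strong_induction_on with
    | _ t ih =>
      intro ht
      have hw := hw0 (nx - 1 - t) (by omega)
      funext r
      have h1 := congrFun hw r
      rw [hwdef] at h1
      simp only [Finset.sum_apply, Pi.smul_apply, smul_eq_mul] at h1
      rw [Finset.sum_range_succ] at h1
      have h2 : ∀ s ∈ Finset.range nx, c s * V s (nx - 1 - t) r = 0 := by
        intro s hs
        have hs' : s < nx := Finset.mem_range.mp hs
        rw [hVdef]
        by_cases hlt : nx - 1 - t < s
        · simp only [if_pos hlt]
          rw [show s - 1 - (nx - 1 - t) = s + t - nx by omega]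
          rw [ih (s + t - nx) (by omega) (by omega)]
          simp
        · simp only [if_neg hlt]
          rw [hη]
          simp
      rw [Finset.sum_congr rfl h2, Finset.sum_const_zero, zero_add, hcnx, one_mul] at h1
      rw [hVdef] at h1
      simp only [if_pos (by omega : nx - 1 - t < nx)] at h1
      rw [show nx - 1 - (nx - 1 - t) = t by omega] at h1
      exact h1
  have hξ : ξ = 0 := by
    apply hctrbinj
    funext q
    simp only [Matrix.vecMul, dotProduct, Matrix.of_apply, Pi.zero_apply]
    have := congrFun (hg q.1 q.1.isLt) q.2
    simpa [Matrix.vecMul, dotProduct] using this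
  funext i
  rcases i with s | ⟨k, r⟩
  · exact congrFun hξ s
  · have := congrFun (hη k) r
    rw [hηdef] at this
    simpa [k.isLt, Fin.eta] using this
end
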